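/- For smooth functions h₁, h₂ : ℝ → ℝ, the vector fields y(h₁) and y(h₂), where y(h) = (1/2) y h'(t) ∂x + h(t) ∂y − (1/2) y h''(t) ∂u, satisfy [y(h₁), y(h₂)] = x((h₁h₂' − h₁'h₂)/2), where x(g) = g(t) ∂x − g'(t) ∂u. -/

import Mathlib

abbrev E : Type := ℝ × ℝ × ℝ × ℝ

noncomputable def bracket (X Y : E → E) : E → E :=
  fun p => fderiv ℝ Y p (X p) - fderiv ℝ X p (Y p)

/-- `x(g) = g(t) ∂x − g'(t) ∂u`. -/
noncomputable def xg (g : ℝ → ℝ) : E → E := fun p => (0, g p.1, 0, -deriv g p.1)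

/-- `y(h) = (1/2) y h'(t) ∂x + h(t) ∂y − (1/2) y h''(t) ∂u`. -/
noncomputable def yh (h : ℝ → ℝ) : E → E := fun p =>
  (0, (1 / 2) * p.2.2.1 * deriv h p.1, h p.1,
   -(1 / 2) * p.2.2.1 * deriv (deriv h) p.1)

noncomputable def Tc : E →L[ℝ] ℝ := ContinuousLinearMap.fst ℝ ℝ (ℝ × ℝ × ℝ)
noncomputable def Yc : E →L[ℝ] ℝ :=
  (ContinuousLinearMap.fst ℝ ℝ ℝ).comp
    ((ContinuousLinearMap.snd ℝ ℝ (ℝ × ℝ)).comp (ContinuousLinearMap.snd ℝ ℝ (ℝ × ℝ × ℝ)))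

@[simp] lemma Tc_apply (v : E) : Tc v = v.1 := rfl
@[simp] lemma Yc_apply (v : E) : Yc v = v.2.2.1 := rfl

lemma comp_fst (k : ℝ → ℝ) (hk : Differentiable ℝ k) (p : E) :
    HasFDerivAt (fun q : E => k q.1) (deriv k p.1 • Tc) p := by
  have : HasFDerivAt (fun q : E => k q.1) ((ContinuousLinearMap.toSpanSingleton ℝ (deriv k p.1)).comp Tc) p :=
    ((hk p.1).hasDerivAt.hasFDerivAt).comp p Tc.hasFDerivAt
  convert this using 1
  refine ContinuousLinearMap.ext fun v => ?_
  simp [mul_comm]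

lemma yh_fderiv (h : ℝ → ℝ) (hh : ContDiff ℝ (⊤ : ℕ∞) h) (p v : E) :
    fderiv ℝ (yh h) p v =
      (0,
       1/2 * v.2.2.1 * deriv h p.1 + 1/2 * p.2.2.1 * (deriv (deriv h) p.1 * v.1),
       deriv h p.1 * v.1,
       -(1/2 * v.2.2.1 * deriv (deriv h) p.1 + 1/2 * p.2.2.1 * (deriv (deriv (deriv h)) p.1 * v.1))) := by
  have hh' : ContDiff ℝ (⊤ : ℕ∞) h := hh.of_le (by simp)
  have hdc : ContDiff ℝ (⊤ : ℕ∞) (deriv h) := (contDiff_infty_iff_deriv.mp hh').2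
  have hd2c : ContDiff ℝ (⊤ : ℕ∞) (deriv (deriv h)) := (contDiff_infty_iff_deriv.mp hdc).2
  have hd0 : Differentiable ℝ h := hh'.differentiable (by simp)
  have hd1 : Differentiable ℝ (deriv h) := hdc.differentiable (by simp)
  have hd2 : Differentiable ℝ (deriv (deriv h)) := hd2c.differentiable (by simp)
  have hy : HasFDerivAt (fun q : E => q.2.2.1) Yc p := Yc.hasFDerivAt
  have hf2 : HasFDerivAt (fun q : E => (1/2) * q.2.2.1 * deriv h q.1)
      ((((1/2) * p.2.2.1) • (deriv (deriv h) p.1 • Tc)) + (deriv h p.1 • ((1/2 : ℝ) • Yc))) p :=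
    (hy.const_mul (1/2)).mul (comp_fst (deriv h) hd1 p)
  have hf3 : HasFDerivAt (fun q : E => h q.1) (deriv h p.1 • Tc) p := comp_fst h hd0 p
  have hf4 : HasFDerivAt (fun q : E => -(1/2) * q.2.2.1 * deriv (deriv h) q.1)
      (((-(1/2) * p.2.2.1) • (deriv (deriv (deriv h)) p.1 • Tc)) + (deriv (deriv h) p.1 • ((-(1/2) : ℝ) • Yc))) p :=
    (hy.const_mul (-(1/2))).mul (comp_fst (deriv (deriv h)) hd2 p)
  have h0 : HasFDerivAt (fun _ : E => (0:ℝ)) (0 : E →L[ℝ] ℝ) p := hasFDerivAt_const 0 p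
  have H : HasFDerivAt (yh h) ((0 : E →L[ℝ] ℝ).prod (_ : E →L[ℝ] ℝ × ℝ × ℝ)) p :=
    h0.prodMk (hf2.prodMk (hf3.prodMk hf4))
  rw [H.fderiv]
  simp [Prod.ext_iff]
  constructor
  · ring
  · ring

theorem bracket_yh_yh (h₁ h₂ : ℝ → ℝ) (h1 : ContDiff ℝ (⊤ : ℕ∞) h₁) (h2 : ContDiff ℝ (⊤ : ℕ∞) h₂) :
    bracket (yh h₁) (yh h₂)
      = xg (fun t => (h₁ t * deriv h₂ t - deriv h₁ t * h₂ t) / 2) := by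
  have h1' : ContDiff ℝ (⊤ : ℕ∞) h₁ := h1.of_le (by simp)
  have h2' : ContDiff ℝ (⊤ : ℕ∞) h₂ := h2.of_le (by simp)
  have d10 : Differentiable ℝ h₁ := h1'.differentiable (by simp)
  have d20 : Differentiable ℝ h₂ := h2'.differentiable (by simp)
  have d11 : Differentiable ℝ (deriv h₁) :=
    ((contDiff_infty_iff_deriv.mp h1').2).differentiable (by simp)
  have d21 : Differentiable ℝ (deriv h₂) :=
    ((contDiff_infty_iff_deriv.mp h2').2).differentiable (by simp)
  funext p
  have key : deriv (fun t => (h₁ t * deriv h₂ t - deriv h₁ t * h₂ t) / 2) p.1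
      = (h₁ p.1 * deriv (deriv h₂) p.1 - deriv (deriv h₁) p.1 * h₂ p.1) / 2 := by
    rw [deriv_div_const, deriv_fun_sub ((d10 p.1).fun_mul (d21 p.1)) ((d11 p.1).fun_mul (d20 p.1)),
      deriv_fun_mul (d10 p.1) (d21 p.1), deriv_fun_mul (d11 p.1) (d20 p.1)]
    ring
  simp only [bracket, xg, key]
  rw [yh_fderiv h₂ h2 p (yh h₁ p), yh_fderiv h₁ h1 p (yh h₂ p)]
  simp [yh, Prod.ext_iff]
  constructor
  · ring
  · ring
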